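/- Let V be a Gotzmann set of monomials of degree d in K[x_1,...,x_n] with gcd(V) = 1 and |V| > 1. Then for any index i as in the splitting lemma (with V_{0,i} Gotzmann and x_i V_{d,i} ⊆ (M\{x_i})V_{0,i}), one has gcd(V_{0,i}) = x_i. -/

import Mathlib

open Finset

/-- Monomials of `K[x_1,…,x_n]` are encoded as exponent vectors `Fin n → ℕ`.
`mulVarsOn S W = {x_j · w : w ∈ W, j ∈ S}`. -/
def mulVarsOn {n : ℕ} (S : Finset (Fin n)) (W : Finset (Fin n → ℕ)) :
    Finset (Fin n → ℕ) :=
  W.biUnion fun v => S.image fun j => v + Pi.single j 1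

/-- `MV = {x_j · v : v ∈ V, 1 ≤ j ≤ n}`. -/
def mulVars {n : ℕ} (W : Finset (Fin n → ℕ)) : Finset (Fin n → ℕ) :=
  mulVarsOn Finset.univ W

/-- `IsBinRep m h p f` says that `h = ∑_{j=p}^{m} C(f j + j, j)` is the `m`-th
binomial representation of `h`: `1 ≤ p ≤ m` and `f` is weakly increasing on `[p,m]`. -/
def IsBinRep (m h p : ℕ) (f : ℕ → ℕ) : Prop :=
  1 ≤ p ∧ p ≤ m ∧ (∀ j k, p ≤ j → j ≤ k → k ≤ m → f j ≤ f k) ∧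
    h = ∑ j ∈ Finset.Icc p m, Nat.choose (f j + j) j

/-- `h^{<m>} = ∑_{j=p}^{m} C(f j + j + 1, j)` for the `m`-th binomial representation `(p, f)`. -/
def upVal (m p : ℕ) (f : ℕ → ℕ) : ℕ :=
  ∑ j ∈ Finset.Icc p m, Nat.choose (f j + j + 1) j

/-- `h_{<<m>>} = ∑_{j=p}^{m} C(f j + j - 1, j - 1)` for the `m`-th binomial representation `(p, f)`. -/
def downVal (m p : ℕ) (f : ℕ → ℕ) : ℕ :=
  ∑ j ∈ Finset.Icc p m, Nat.choose (f j + j - 1) (j - 1)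

/-- `W` is a Gotzmann set with respect to the set of variables `S`:
either `W = ∅`, or (in at most one variable) `|SW| = |W|`, or
`|SW| = |W|^{<|S|-1>}` computed from the `(|S|-1)`-th binomial representation of `|W|`. -/
def IsGotzmannOn {n : ℕ} (S : Finset (Fin n)) (W : Finset (Fin n → ℕ)) : Prop :=
  W = ∅ ∨ (S.card ≤ 1 ∧ (mulVarsOn S W).card = W.card) ∨
    ∃ p f, IsBinRep (S.card - 1) W.card p f ∧
      (mulVarsOn S W).card = upVal (S.card - 1) p f

/-- `V` is a Gotzmann set of monomials of `K[x_1,…,x_n]`: `|MV| = |V|^{<n-1>}`. -/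
def IsGotzmann {n : ℕ} (W : Finset (Fin n → ℕ)) : Prop :=
  IsGotzmannOn Finset.univ W

/-- The exponent vector of `gcd(V)` (pointwise minimum of the exponent vectors). -/
noncomputable def gcdMon {n : ℕ} (V : Finset (Fin n → ℕ)) : Fin n → ℕ :=
  fun j => sInf ((fun v => v j) '' (V : Set (Fin n → ℕ)))

/-- `w` comes strictly earlier than `v` in the lexicographic order on monomials
(`x_1 > x_2 > … > x_n`, larger exponent vector comes earlier). -/
def lexEarlier {n : ℕ} (w v : Fin n → ℕ) : Prop :=
  ∃ i : Fin n, (∀ j, j < i → w j = v j) ∧ v i < w i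

/-- `V` is a lexsegment set of monomials of degree `d`: an initial segment of
the monomials of degree `d` in lexicographic order. -/
def IsLexSegment (n d : ℕ) (V : Finset (Fin n → ℕ)) : Prop :=
  (∀ v ∈ V, ∑ j, v j = d) ∧
    ∀ v ∈ V, ∀ w : Fin n → ℕ, (∑ j, w j = d) → lexEarlier w v → w ∈ V

/-- `V` is strongly stable: for `u ∈ V`, `i < j` with `x_j ∣ u`, also `(x_i/x_j)·u ∈ V`. -/
def IsStronglyStable {n : ℕ} (V : Finset (Fin n → ℕ)) : Prop :=
  ∀ u ∈ V, ∀ i j : Fin n, i < j → 0 < u j →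
    (u + Pi.single i 1 - Pi.single j 1) ∈ V

/-- `u` is a fixed empty element of `V` (of degree `d`) for `i`: no monomial of
degree `d` which is under `u` for `i` (all exponents except possibly the `i`-th
bounded by those of `u`) belongs to `V`. -/
def IsFEE (n d : ℕ) (V : Finset (Fin n → ℕ)) (i : Fin n) (u : Fin n → ℕ) : Prop :=
  u ∉ V ∧ ∀ v : Fin n → ℕ, (∑ j, v j = d) → (∀ j, j ≠ i → v j ≤ u j) → v ∉ V

/-!
Since `gcd(V) = 1`, for every `j` some `v ∈ V` has `v j = 0`. If `v i > 0`, then `v ∈ V_{0,i}`.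
If `v i = 0`, the splitting condition writes `x_i v = x_k w` with `k ≠ i` and `w ∈ V_{0,i}`;
then `w i = 1` and `w j ≤ v j` for `j ≠ i`. As `x_i` divides every element of `V_{0,i}`,
its gcd is exactly `x_i`.
-/

section GcdMon

variable {n : ℕ} {V : Finset (Fin n → ℕ)}

lemma gcdMon_le {v : Fin n → ℕ} (hv : v ∈ V) : gcdMon V ≤ v :=
  fun j => Nat.sInf_le ⟨v, hv, rfl⟩

lemma exists_apply_eq_gcdMon (hV : V.Nonempty) (j : Fin n) : ∃ v ∈ V, v j = gcdMon V j :=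
  Nat.sInf_mem (hV.to_set.image _)

lemma gcdMon_eq_of_forall_le {m : Fin n → ℕ} (hle : ∀ v ∈ V, m ≤ v)
    (hex : ∀ j, ∃ v ∈ V, v j = m j) : gcdMon V = m := by
  funext j
  obtain ⟨v, hv, hvj⟩ := hex j
  obtain ⟨u, hu, huj⟩ := exists_apply_eq_gcdMon ⟨v, hv⟩ j
  exact le_antisymm (hvj ▸ gcdMon_le hv j) (huj ▸ hle u hu j)

end GcdMon

lemma exists_mem_filter_pos_le_of_image_subset {n : ℕ} {V : Finset (Fin n → ℕ)} {i : Fin n}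
    (hsub : ((V.filter fun v => v i = 0).image fun v => v + Pi.single i 1) ⊆
      mulVarsOn (Finset.univ.erase i) (V.filter fun v => 0 < v i))
    {v : Fin n → ℕ} (hv : v ∈ V) (hvi : v i = 0) :
    ∃ w ∈ V.filter (fun v => 0 < v i), w i = 1 ∧ ∀ j ≠ i, w j ≤ v j := by
  have hmem := hsub (mem_image_of_mem _ (mem_filter.mpr ⟨hv, hvi⟩))
  simp only [mulVarsOn, mem_biUnion, mem_image, mem_erase, mem_univ, and_true] at hmem
  obtain ⟨w, hw, k, hki, hwk⟩ := hmem
  refine ⟨w, hw, ?_, fun j hji => ?_⟩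
  · have := congrFun hwk i
    simp only [Pi.add_apply, Pi.single_eq_same, Pi.single_eq_of_ne (Ne.symm hki), hvi] at this
    omega
  · have := congrFun hwk j
    simp only [Pi.add_apply, Pi.single_eq_of_ne hji] at this
    omega

theorem gcd_V0i_general (n : ℕ) (V : Finset (Fin n → ℕ))
    (hgcd : gcdMon V = 0) (h1 : 1 < V.card)
    (i : Fin n)
    (hsub : ((V.filter fun v => v i = 0).image fun v => v + Pi.single i 1) ⊆
      mulVarsOn (Finset.univ.erase i) (V.filter fun v => 0 < v i)) :
    gcdMon (V.filter fun v => 0 < v i) = Pi.single i 1 := by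
  have hV : V.Nonempty := card_pos.mp (by omega)
  apply gcdMon_eq_of_forall_le
  · intro w hw j
    rcases eq_or_ne j i with rfl | hji
    · rw [Pi.single_eq_same]
      exact (mem_filter.mp hw).2
    · simp [Pi.single_eq_of_ne hji]
  · intro j
    obtain ⟨v, hv, hvj⟩ := exists_apply_eq_gcdMon hV j
    rw [hgcd, Pi.zero_apply] at hvj
    rcases eq_or_ne j i with rfl | hji
    · obtain ⟨w, hw, hwj, -⟩ := exists_mem_filter_pos_le_of_image_subset hsub hv hvj
      exact ⟨w, hw, by simpa using hwj⟩
    rw [Pi.single_eq_of_ne hji]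
    rcases Nat.eq_zero_or_pos (v i) with hvi | hvi
    · obtain ⟨w, hw, -, hwv⟩ := exists_mem_filter_pos_le_of_image_subset hsub hv hvi
      exact ⟨w, hw, by have := hwv j hji; omega⟩
    · exact ⟨v, mem_filter.mpr ⟨hv, hvi⟩, hvj⟩

/-- For a Gotzmann set `V` with `gcd(V)=1`, `|V|>1`, and an index `i` as in the
splitting lemma, one has `gcd(V_{0,i}) = x_i`. -/
theorem gcd_V0i (n d : ℕ) (V : Finset (Fin n → ℕ))
    (hdeg : ∀ v ∈ V, ∑ j, v j = d) (hgcd : gcdMon V = 0) (h1 : 1 < V.card)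
    (hG : IsGotzmann V) (i : Fin n)
    (hG0 : IsGotzmann (V.filter fun v => 0 < v i))
    (hsub : ((V.filter fun v => v i = 0).image fun v => v + Pi.single i 1) ⊆
      mulVarsOn (Finset.univ.erase i) (V.filter fun v => 0 < v i)) :
    gcdMon (V.filter fun v => 0 < v i) = Pi.single i 1 :=
  gcd_V0i_general n V hgcd h1 i hsub
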